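/- arXiv:2602.00784 — 2 statements merged into one kernel-verified Lean document; each statement's English description precedes it below -/
import Mathlib

section
/- Every law-invariant coherent risk estimator ρ̂: ℝ^n → ℝ admits a discrete Kusuoka representation: there exists a nonempty convex set 𝓜 ⊆ Δ_n such that ρ̂(x) = sup_{μ∈𝓜} ∑_{k=1}^n μ_k · dES_{k/n}(x) for all x ∈ ℝ^n, with the supremum attained. -/
/-! By Hahn–Banach, at every point `x` the sublinear functional `ρ` is touched from
below by a linear functional `y ↦ q ⬝ᵥ y`. Monotonicity and cash invariance force `-q` to be a
probability vector. By law invariance `ρ y` also dominates `q ⬝ᵥ (y ∘ σ)` for every permutation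
`σ`, hence (rearrangement inequality) the pairing of `q` sorted increasingly with the order
statistics of `y`, and that pairing still equals `ρ x` at `x`. Abel summation turns this pairing
into a mixture `∑ μ_k dES_k` of discrete expected shortfalls with `μ_k = k (a_k - a_{k+1}) ≥ 0`,
where `a = -q` sorted decreasingly. The mixtures in the simplex dominated by `ρ` form `𝓜`. -/

/-- The `i`-th order statistic (`i`-th smallest coordinate, `i = 1,…,n`) of `x ∈ ℝ^n`. -/
noncomputable def orderStat {n : ℕ} (x : Fin n → ℝ) (i : ℕ) : ℝ :=
  ((Finset.univ.val.map x).sort (· ≤ ·)).getD (i - 1) 0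

/-- Discrete expected shortfall at level `k/n`: `-(1/k) ∑_{i=1}^k x_{i:n}`. -/
noncomputable def dES {n : ℕ} (k : ℕ) (x : Fin n → ℝ) : ℝ :=
  -(1 / (k : ℝ)) * ∑ i ∈ Finset.Icc 1 k, orderStat x i

open Finset

lemma Fin.sort_univ_val_map {α : Type*} [LinearOrder α] {n : ℕ} (x : Fin n → α) :
    (univ.val.map x).sort (· ≤ ·) = List.ofFn (x ∘ Tuple.sort x) := by
  rw [Fin.univ_val_map, ← Multiset.coe_eq_coe.mpr ((Tuple.sort x).ofFn_comp_perm x),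
    Multiset.coe_sort]
  exact List.mergeSort_eq_self _ (Tuple.monotone_sort x).sortedLE_ofFn.pairwise

lemma orderStat_succ {n : ℕ} (x : Fin n → ℝ) (i : Fin n) :
    orderStat x (i + 1) = x (Tuple.sort x i) := by
  rw [orderStat, Fin.sort_univ_val_map, Nat.add_sub_cancel]
  simp

lemma dES_succ {n : ℕ} (k : ℕ) (x : Fin n → ℝ) :
    dES (k + 1) x = -(∑ j ∈ range (k + 1), orderStat x (j + 1)) / (k + 1) := by
  rw [dES, range_eq_Ico, sum_Ico_add', zero_add, Ico_add_one_right_eq_Icc]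
  push_cast
  ring

lemma sum_range_mul_eq_sum_range_sub_mul_partialSum {R : Type*} [CommRing R] (a s : ℕ → R)
    (m : ℕ) :
    ∑ j ∈ range m, a j * s j =
      ∑ k ∈ range m, (a k - a (k + 1)) * ∑ j ∈ range (k + 1), s j +
        a m * ∑ j ∈ range m, s j := by
  induction m with
  | zero => simp
  | succ m ih =>
    rw [sum_range_succ, ih, sum_range_succ (fun k => (a k - a (k + 1)) * _), sum_range_succ s]
    ring

section ESDecomposition

variable {n : ℕ}

noncomputable def dESVector (x : Fin n → ℝ) : Fin n → ℝ := fun k => dES ((k : ℕ) + 1) x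

/-- With `a = -w`, this is the paper's `μ_k = k (w_k - w_{k+1})` in `0`-based indexing. -/
def esWeights (a : ℕ → ℝ) : Fin n → ℝ := fun k => ((k : ℕ) + 1 : ℝ) * (a ((k : ℕ) + 1) - a k)

lemma esWeights_nonneg {a : ℕ → ℝ} (ha : Monotone a) (k : Fin n) : 0 ≤ esWeights a k :=
  mul_nonneg (by positivity) (sub_nonneg.mpr (ha k.val.le_succ))

lemma sum_esWeights {a : ℕ → ℝ} (ha : a n = 0) :
    ∑ k : Fin n, esWeights a k = -∑ i : Fin n, a i := by
  have abel := sum_range_mul_eq_sum_range_sub_mul_partialSum a (fun _ => 1) n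
  simp only [mul_one, sum_const, card_range, nsmul_eq_mul, ha, zero_mul, add_zero] at abel
  rw [Fin.sum_univ_eq_sum_range a, abel, ← sum_neg_distrib,
    ← Fin.sum_univ_eq_sum_range (fun k => -((a k - a (k + 1)) * ((k + 1 : ℕ) : ℝ)))]
  refine sum_congr rfl fun k _ => ?_
  simp only [esWeights]
  push_cast
  ring

lemma esWeights_dotProduct_dESVector {a : ℕ → ℝ} (ha : a n = 0) (y : Fin n → ℝ) :
    esWeights a ⬝ᵥ dESVector y = ∑ i : Fin n, a i * y (Tuple.sort y i) := by
  have hterm : ∀ k : ℕ, ((k : ℝ) + 1) * (a (k + 1) - a k) * dES (k + 1) y =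
      (a k - a (k + 1)) * ∑ j ∈ range (k + 1), orderStat y (j + 1) := by
    intro k
    rw [dES_succ]
    field_simp
    ring
  calc esWeights a ⬝ᵥ dESVector y
      = ∑ k ∈ range n, ((k : ℝ) + 1) * (a (k + 1) - a k) * dES (k + 1) y :=
        Fin.sum_univ_eq_sum_range (fun k => ((k : ℝ) + 1) * (a (k + 1) - a k) * dES (k + 1) y) n
    _ = ∑ k ∈ range n, (a k - a (k + 1)) * ∑ j ∈ range (k + 1), orderStat y (j + 1) :=
        sum_congr rfl fun k _ => hterm k
    _ = ∑ j ∈ range n, a j * orderStat y (j + 1) := by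
        rw [sum_range_mul_eq_sum_range_sub_mul_partialSum a (fun j => orderStat y (j + 1)), ha,
          zero_mul, add_zero]
    _ = ∑ i : Fin n, a i * y (Tuple.sort y i) := by
        rw [← Fin.sum_univ_eq_sum_range (fun j => a j * orderStat y (j + 1))]
        simp only [orderStat_succ]

end ESDecomposition

section Rearrangement

variable {α : Type*} [LinearOrder α] {n : ℕ}

lemma dotProduct_le_sum_sort_mul_sort [CommSemiring α] [IsStrictOrderedRing α] [ExistsAddOfLE α]
    (q y : Fin n → α) :
    q ⬝ᵥ y ≤ ∑ i, q (Tuple.sort q i) * y (Tuple.sort y i) := by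
  have hmv : Monovary (q ∘ Tuple.sort q) (y ∘ Tuple.sort y) :=
    (Tuple.monotone_sort q).monovary (Tuple.monotone_sort y)
  calc q ⬝ᵥ y = ∑ i, q (Tuple.sort y i) * y (Tuple.sort y i) :=
        (Equiv.sum_comp (Tuple.sort y) fun j => q j * y j).symm
    _ = ∑ i, (q ∘ Tuple.sort q) (((Tuple.sort y).trans (Tuple.sort q).symm) i) *
          (y ∘ Tuple.sort y) i := by simp
    _ ≤ _ := hmv.sum_comp_perm_mul_le_sum_mul

lemma exists_perm_sum_sort_mul_sort_eq [CommSemiring α] (q y : Fin n → α) :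
    ∃ σ : Equiv.Perm (Fin n), ∑ i, q (Tuple.sort q i) * y (Tuple.sort y i) = q ⬝ᵥ (y ∘ σ) := by
  refine ⟨(Tuple.sort q).symm.trans (Tuple.sort y), ?_⟩
  symm
  rw [dotProduct, ← Equiv.sum_comp (Tuple.sort q)]
  simp

end Rearrangement

section SortedPad

variable {n : ℕ}

noncomputable def sortedPad (q : Fin n → ℝ) (j : ℕ) : ℝ :=
  if h : j < n then q (Tuple.sort q ⟨j, h⟩) else 0

lemma sortedPad_coe (q : Fin n → ℝ) (i : Fin n) : sortedPad q i = q (Tuple.sort q i) := by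
  simp [sortedPad]

lemma sortedPad_self (q : Fin n → ℝ) : sortedPad q n = 0 := by
  simp [sortedPad]

lemma sum_sortedPad (q : Fin n → ℝ) : ∑ i : Fin n, sortedPad q i = ∑ i, q i := by
  simp only [sortedPad_coe]
  exact Equiv.sum_comp (Tuple.sort q) q

lemma monotone_sortedPad {q : Fin n → ℝ} (hq : ∀ i, q i ≤ 0) :
    Monotone (sortedPad q) := by
  intro j₁ j₂ h
  unfold sortedPad
  split_ifs with h₁ h₂ h₂
  · exact Tuple.monotone_sort q (show (⟨j₁, h₁⟩ : Fin n) ≤ ⟨j₂, h₂⟩ from h)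
  · exact hq _
  · omega
  · rfl

end SortedPad

section Sublinear

variable {E : Type*} [AddCommGroup E] [Module ℝ E] {p : E → ℝ}

lemma apply_zero_of_pos_homogeneous (hom : ∀ c : ℝ, 0 < c → ∀ x, p (c • x) = c * p x) :
    p 0 = 0 := by
  have := hom 2 two_pos 0
  rw [smul_zero] at this
  linarith

lemma mul_apply_le_apply_smul (hom : ∀ c : ℝ, 0 < c → ∀ x, p (c • x) = c * p x)
    (subadd : ∀ x y, p (x + y) ≤ p x + p y) (c : ℝ) (x : E) : c * p x ≤ p (c • x) := by
  rcases lt_trichotomy c 0 with hc | rfl | hc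
  · have := subadd (c • x) ((-c) • x)
    rw [← add_smul, add_neg_cancel, zero_smul, apply_zero_of_pos_homogeneous hom,
      hom (-c) (neg_pos.mpr hc)] at this
    linarith
  · simp [apply_zero_of_pos_homogeneous hom]
  · exact (hom c hc x).ge

lemma exists_linearMap_le_eq (hom : ∀ c : ℝ, 0 < c → ∀ x, p (c • x) = c * p x)
    (subadd : ∀ x y, p (x + y) ≤ p x + p y) (x : E) :
    ∃ g : E →ₗ[ℝ] ℝ, (∀ y, g y ≤ p y) ∧ g x = p x := by
  have hx : ∀ c : ℝ, c • x = 0 → c • p x = 0 := fun c hc => by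
    rcases smul_eq_zero.mp hc with rfl | rfl
    · exact zero_smul ℝ _
    · rw [apply_zero_of_pos_homogeneous hom, smul_zero]
  let f : E →ₗ.[ℝ] ℝ := LinearPMap.mkSpanSingleton' x (p x) hx
  have hx_mem : x ∈ f.domain := Submodule.mem_span_singleton_self x
  have hf_le : ∀ z : f.domain, f z ≤ p z := by
    rintro ⟨z, hz⟩
    obtain ⟨c, rfl⟩ := Submodule.mem_span_singleton.mp hz
    exact (LinearPMap.mkSpanSingleton'_apply x (p x) hx c hz).trans_le
      (mul_apply_le_apply_smul hom subadd c x)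
  obtain ⟨g, hgf, hgp⟩ := exists_extension_of_le_sublinear f p hom subadd hf_le
  exact ⟨g, hgp, (hgf ⟨x, hx_mem⟩).trans (LinearPMap.mkSpanSingleton'_apply_self _ _ _ _)⟩

end Sublinear

lemma convex_setOf_forall_dotProduct_le {m ι : Type*} [Fintype m] (v : ι → m → ℝ) (r : ι → ℝ) :
    Convex ℝ {μ : m → ℝ | ∀ i, μ ⬝ᵥ v i ≤ r i} := by
  simp only [Set.ofPred_forall]
  exact convex_iInter fun i => convex_halfSpace_le
    ⟨fun a b => add_dotProduct a b (v i), fun c a => smul_dotProduct c a (v i)⟩ (r i)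

section RiskEstimator

variable {n : ℕ} {ρ : (Fin n → ℝ) → ℝ}

lemma exists_dotProduct_le_eq
    (h_hom : ∀ (x : Fin n → ℝ) (l : ℝ), 0 ≤ l → ρ (fun i => l * x i) = l * ρ x)
    (h_sub : ∀ x y : Fin n → ℝ, ρ (fun i => x i + y i) ≤ ρ x + ρ y) (x : Fin n → ℝ) :
    ∃ q : Fin n → ℝ, (∀ y, q ⬝ᵥ y ≤ ρ y) ∧ q ⬝ᵥ x = ρ x := by
  obtain ⟨g, hg_le, hg_x⟩ := exists_linearMap_le_eq (fun c hc y => h_hom y c hc.le) h_sub x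
  have hg : ∀ y, (dotProductEquiv ℝ (Fin n)).symm g ⬝ᵥ y = g y := fun y =>
    LinearMap.congr_fun ((dotProductEquiv ℝ (Fin n)).apply_symm_apply g) y
  exact ⟨_, fun y => (hg y).trans_le (hg_le y), (hg x).trans hg_x⟩

lemma nonpos_of_forall_dotProduct_le
    (h_mono : ∀ x y : Fin n → ℝ, (∀ i, x i ≤ y i) → ρ y ≤ ρ x)
    (h_hom : ∀ (x : Fin n → ℝ) (l : ℝ), 0 ≤ l → ρ (fun i => l * x i) = l * ρ x)
    {q : Fin n → ℝ} (hq : ∀ y, q ⬝ᵥ y ≤ ρ y) (i : Fin n) : q i ≤ 0 :=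
  calc q i = q ⬝ᵥ Pi.single i 1 := (dotProduct_single_one q i).symm
    _ ≤ ρ (Pi.single i 1) := hq _
    _ ≤ ρ 0 := h_mono _ _ (Pi.single_nonneg.mpr zero_le_one)
    _ = 0 := apply_zero_of_pos_homogeneous fun c hc y => h_hom y c hc.le

lemma sum_eq_neg_one_of_forall_dotProduct_le
    (h_cash : ∀ (x : Fin n → ℝ) (m : ℝ), ρ (fun i => x i + m) = ρ x - m)
    (h_hom : ∀ (x : Fin n → ℝ) (l : ℝ), 0 ≤ l → ρ (fun i => l * x i) = l * ρ x)
    {q : Fin n → ℝ} (hq : ∀ y, q ⬝ᵥ y ≤ ρ y) : ∑ i, q i = -1 := by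
  have h_zero : ρ 0 = 0 := apply_zero_of_pos_homogeneous fun c hc y => h_hom y c hc.le
  have h_one : ρ 1 = -1 := by simpa [h_zero, Pi.one_def] using h_cash 0 1
  have h_neg_one : ρ (-1) = 1 := by simpa [h_zero, Pi.one_def, Pi.neg_def] using h_cash 0 (-1)
  have upper := hq 1
  have lower := hq (-1)
  rw [dotProduct_one, h_one] at upper
  rw [dotProduct_neg, dotProduct_one, h_neg_one] at lower
  linarith

lemma exists_mem_stdSimplex_dotProduct_dESVector_eq
    (h_mono : ∀ x y : Fin n → ℝ, (∀ i, x i ≤ y i) → ρ y ≤ ρ x)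
    (h_cash : ∀ (x : Fin n → ℝ) (m : ℝ), ρ (fun i => x i + m) = ρ x - m)
    (h_hom : ∀ (x : Fin n → ℝ) (l : ℝ), 0 ≤ l → ρ (fun i => l * x i) = l * ρ x)
    (h_sub : ∀ x y : Fin n → ℝ, ρ (fun i => x i + y i) ≤ ρ x + ρ y)
    (h_law : ∀ (x : Fin n → ℝ) (σ : Equiv.Perm (Fin n)), ρ (x ∘ σ) = ρ x) (x : Fin n → ℝ) :
    ∃ μ ∈ stdSimplex ℝ (Fin n), (∀ y, μ ⬝ᵥ dESVector y ≤ ρ y) ∧ μ ⬝ᵥ dESVector x = ρ x := by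
  obtain ⟨q, hq, hqx⟩ := exists_dotProduct_le_eq h_hom h_sub x
  have hmix : ∀ y, esWeights (sortedPad q) ⬝ᵥ dESVector y =
      ∑ i, q (Tuple.sort q i) * y (Tuple.sort y i) := fun y => by
    simp only [esWeights_dotProduct_dESVector (sortedPad_self q), sortedPad_coe]
  have hle : ∀ y, esWeights (sortedPad q) ⬝ᵥ dESVector y ≤ ρ y := fun y => by
    obtain ⟨σ, hσ⟩ := exists_perm_sum_sort_mul_sort_eq q y
    rw [hmix, hσ, ← h_law y σ]
    exact hq _
  refine ⟨esWeights (sortedPad q),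
    ⟨esWeights_nonneg (monotone_sortedPad (nonpos_of_forall_dotProduct_le h_mono h_hom hq)), ?_⟩,
    hle, (hle x).antisymm ?_⟩
  · rw [sum_esWeights (sortedPad_self q), sum_sortedPad,
      sum_eq_neg_one_of_forall_dotProduct_le h_cash h_hom hq, neg_neg]
  · rw [hmix, ← hqx]
    exact dotProduct_le_sum_sort_mul_sort q x

end RiskEstimator

/-- Discrete Kusuoka representation: every law-invariant coherent risk
estimator is the attained supremum over a nonempty convex set of mixtures of discrete
expected shortfalls at the grid levels `k/n`, `k = 1,…,n`. -/
theorem discrete_kusuoka_representation (n : ℕ) (ρ : (Fin n → ℝ) → ℝ)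
    (h_mono : ∀ x y : Fin n → ℝ, (∀ i, x i ≤ y i) → ρ y ≤ ρ x)
    (h_cash : ∀ (x : Fin n → ℝ) (m : ℝ), ρ (fun i => x i + m) = ρ x - m)
    (h_hom : ∀ (x : Fin n → ℝ) (l : ℝ), 0 ≤ l → ρ (fun i => l * x i) = l * ρ x)
    (h_sub : ∀ x y : Fin n → ℝ, ρ (fun i => x i + y i) ≤ ρ x + ρ y)
    (h_law : ∀ (x : Fin n → ℝ) (σ : Equiv.Perm (Fin n)), ρ (x ∘ σ) = ρ x) :
    ∃ 𝓜 : Set (Fin n → ℝ), 𝓜.Nonempty ∧ Convex ℝ 𝓜 ∧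
      (∀ μ ∈ 𝓜, (∀ k, 0 ≤ μ k) ∧ ∑ k, μ k = 1) ∧
      ∀ x : Fin n → ℝ, ∃ μ ∈ 𝓜,
        ρ x = ∑ k : Fin n, μ k * dES (k + 1) x ∧
          ∀ ν ∈ 𝓜, ∑ k : Fin n, ν k * dES (k + 1) x ≤ ρ x := by
  have supporting := exists_mem_stdSimplex_dotProduct_dESVector_eq h_mono h_cash h_hom h_sub h_law
  obtain ⟨μ₀, hμ₀, hμ₀_le, -⟩ := supporting 0
  refine ⟨stdSimplex ℝ (Fin n) ∩ {μ | ∀ y, μ ⬝ᵥ dESVector y ≤ ρ y}, ⟨μ₀, hμ₀, hμ₀_le⟩,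
    (convex_stdSimplex ℝ (Fin n)).inter (convex_setOf_forall_dotProduct_le _ _),
    fun μ hμ => hμ.1, fun x => ?_⟩
  obtain ⟨μ, hμ, hμ_le, hμx⟩ := supporting x
  exact ⟨μ, ⟨hμ, hμ_le⟩, hμx.symm, fun ν hν => hν.2 x⟩
end

section
/- If ρ̂: ℝ^n → ℝ is a law-invariant coherent risk estimator that is comonotonic additive (ρ̂(x+y) = ρ̂(x) + ρ̂(y) whenever (x_i−x_j)(y_i−y_j) ≥ 0 for all i,j), then there exists a unique a ∈ Δ_n^↓ such that ρ̂(x) = ∑_{i=1}^n a_i(−x_{i:n}) for all x ∈ ℝ^n. -/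
open Finset

section TailIndicators

variable {n : ℕ}

def tailInd (n k : ℕ) : Fin n → ℝ := fun i => if k ≤ (i : ℕ) then 1 else 0

theorem monotone_tailInd (n k : ℕ) : Monotone (tailInd n k) := by
  intro i j (hij : (i : ℕ) ≤ j)
  unfold tailInd
  split_ifs <;> norm_num
  omega

theorem tailInd_succ_le (n k : ℕ) : tailInd n (k + 1) ≤ tailInd n k := by
  intro i
  unfold tailInd
  split_ifs <;> norm_num
  omega

theorem tailInd_zero : tailInd n 0 = fun _ => 1 := by
  funext i
  simp [tailInd]

theorem tailInd_eq_zero {k : ℕ} (hk : n ≤ k) : tailInd n k = 0 := by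
  funext i
  simp only [tailInd, Pi.zero_apply, ite_eq_right_iff, one_ne_zero]
  omega

theorem tailInd_sub_tailInd_succ (k : Fin n) :
    tailInd n k - tailInd n (k + 1) = Pi.single k 1 := by
  funext i
  simp only [tailInd, Pi.sub_apply, Pi.single_apply, Fin.ext_iff]
  split_ifs <;> simp_all <;> omega

theorem tailInd_add_tailInd_add_two {k : ℕ} (hk : k + 1 < n) :
    tailInd n k + tailInd n (k + 2) =
      tailInd n (k + 1) + tailInd n (k + 1) ∘ Equiv.swap ⟨k, by omega⟩ ⟨k + 1, hk⟩ := by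
  funext i
  simp only [tailInd, Pi.add_apply, Function.comp_apply, Equiv.swap_apply_def, Fin.ext_iff]
  split_ifs <;> simp_all <;> omega

end TailIndicators

section MonotoneDecomposition

variable {n : ℕ}

def increment (x : Fin n → ℝ) : ℕ → ℝ
  | 0 => if h : 0 < n then x ⟨0, h⟩ else 0
  | k + 1 => if h : k + 1 < n then x ⟨k + 1, h⟩ - x ⟨k, by omega⟩ else 0

theorem increment_nonneg {x : Fin n → ℝ} (hx : Monotone x) {k : ℕ} (hk : k ≠ 0) :
    0 ≤ increment x k := by
  obtain ⟨k, rfl⟩ := Nat.exists_eq_succ_of_ne_zero hk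
  simp only [increment]
  split_ifs
  · exact sub_nonneg.2 (hx (Fin.mk_le_mk.2 k.le_succ))
  · rfl

theorem sum_range_increment (x : Fin n → ℝ) (i : Fin n) :
    ∑ k ∈ range (i + 1), increment x k = x i := by
  obtain ⟨i, hi⟩ := i
  induction i with
  | zero => simp [increment, hi]
  | succ i ih =>
    rw [sum_range_succ, ih (by omega)]
    simp [increment, hi]

theorem sum_increment_smul_tailInd (x : Fin n → ℝ) :
    ∑ k ∈ range n, increment x k • tailInd n k = x := by
  funext i
  have hfilter : (range n).filter (· ≤ (i : ℕ)) = range (i + 1) := by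
    ext k
    simp only [mem_filter, mem_range]
    omega
  simp only [Finset.sum_apply, Pi.smul_apply, tailInd, smul_eq_mul, mul_ite, mul_one, mul_zero]
  rw [← sum_filter, hfilter, sum_range_increment]

end MonotoneDecomposition

/-- Any two nondecreasing vectors are comonotone, so this is what comonotonic additivity and
positive homogeneity give on the cone of nondecreasing vectors. -/
structure IsAdditiveOnMonotone {n : ℕ} (f : (Fin n → ℝ) → ℝ) : Prop where
  add : ∀ x y, Monotone x → Monotone y → f (x + y) = f x + f y
  smul : ∀ (c : ℝ) x, 0 ≤ c → f (c • x) = c * f x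

theorem IsAdditiveOnMonotone.eq_of_eq_tailInd {n : ℕ} {f g : (Fin n → ℝ) → ℝ}
    (hf : IsAdditiveOnMonotone f) (hg : IsAdditiveOnMonotone g)
    (hconst : ∀ c, f (fun _ => c) = g (fun _ => c))
    (htail : ∀ k, f (tailInd n k) = g (tailInd n k)) {x : Fin n → ℝ} (hx : Monotone x) :
    f x = g x := by
  rw [← sum_increment_smul_tailInd x]
  refine (sum_induction _ (fun v => Monotone v ∧ f v = g v) ?_ ?_ ?_).2
  · rintro v w ⟨hv, hfgv⟩ ⟨hw, hfgw⟩
    exact ⟨hv.add hw, by rw [hf.add v w hv hw, hg.add v w hv hw, hfgv, hfgw]⟩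
  · exact ⟨monotone_const, hconst 0⟩
  · intro k _
    rcases eq_or_ne k 0 with rfl | hk
    · have hconst_term : increment x 0 • tailInd n 0 = fun _ => increment x 0 := by
        funext i
        simp [tailInd_zero]
      exact ⟨hconst_term ▸ monotone_const, hconst_term ▸ hconst _⟩
    · have hc := increment_nonneg hx hk
      exact ⟨(monotone_tailInd n k).const_smul hc,
        by rw [hf.smul _ _ hc, hg.smul _ _ hc, htail]⟩

section LEstimator

variable {n : ℕ}

noncomputable def lEstimator (a x : Fin n → ℝ) : ℝ := ∑ i, a i * -x i

theorem lEstimator_add (a x y : Fin n → ℝ) :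
    lEstimator a (x + y) = lEstimator a x + lEstimator a y := by
  simp only [lEstimator, Pi.add_apply, ← sum_add_distrib]
  exact sum_congr rfl fun i _ => by ring

theorem lEstimator_sub (a x y : Fin n → ℝ) :
    lEstimator a (x - y) = lEstimator a x - lEstimator a y := by
  simp only [lEstimator, Pi.sub_apply, ← sum_sub_distrib]
  exact sum_congr rfl fun i _ => by ring

theorem lEstimator_smul (a x : Fin n → ℝ) (c : ℝ) :
    lEstimator a (c • x) = c * lEstimator a x := by
  simp only [lEstimator, Pi.smul_apply, smul_eq_mul, mul_sum]
  exact sum_congr rfl fun i _ => by ring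

theorem lEstimator_const (a : Fin n → ℝ) (c : ℝ) :
    lEstimator a (fun _ => c) = -c * ∑ i, a i := by
  simp only [lEstimator, mul_sum]
  exact sum_congr rfl fun i _ => by ring

theorem isAdditiveOnMonotone_lEstimator (a : Fin n → ℝ) : IsAdditiveOnMonotone (lEstimator a) :=
  ⟨fun x y _ _ => lEstimator_add a x y, fun c x _ => lEstimator_smul a x c⟩

theorem lEstimator_tailInd_sub_succ (a : Fin n → ℝ) (k : Fin n) :
    lEstimator a (tailInd n k) - lEstimator a (tailInd n (k + 1)) = -a k := by
  rw [← lEstimator_sub, tailInd_sub_tailInd_succ]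
  simp [lEstimator, Pi.single_apply]

theorem eq_of_lEstimator_tailInd_eq {a b : Fin n → ℝ}
    (h : ∀ k, lEstimator a (tailInd n k) = lEstimator b (tailInd n k)) : a = b := by
  funext k
  have ha := lEstimator_tailInd_sub_succ a k
  have hb := lEstimator_tailInd_sub_succ b k
  rw [h, h] at ha
  linarith

end LEstimator

section RiskWeights

variable {n : ℕ} {ρ : (Fin n → ℝ) → ℝ}

noncomputable def riskWeight (ρ : (Fin n → ℝ) → ℝ) (k : ℕ) : ℝ :=
  ρ (tailInd n (k + 1)) - ρ (tailInd n k)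

theorem riskWeight_nonneg (hρ : Antitone ρ) (k : ℕ) : 0 ≤ riskWeight ρ k :=
  sub_nonneg.2 (hρ (tailInd_succ_le n k))

theorem map_tailInd_add_map_tailInd_add_two_le (hadd : IsAdditiveOnMonotone ρ)
    (hsub : ∀ x y, ρ (x + y) ≤ ρ x + ρ y) (hlaw : ∀ x (σ : Equiv.Perm (Fin n)), ρ (x ∘ σ) = ρ x)
    {k : ℕ} (hk : k + 1 < n) :
    ρ (tailInd n k) + ρ (tailInd n (k + 2)) ≤ 2 * ρ (tailInd n (k + 1)) := by
  rw [← hadd.add _ _ (monotone_tailInd n k) (monotone_tailInd n (k + 2)),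
    tailInd_add_tailInd_add_two hk]
  calc _ ≤ _ := hsub _ _
    _ = _ := by rw [hlaw]; ring

theorem antitone_riskWeight (hρ : Antitone ρ) (hadd : IsAdditiveOnMonotone ρ)
    (hsub : ∀ x y, ρ (x + y) ≤ ρ x + ρ y) (hlaw : ∀ x (σ : Equiv.Perm (Fin n)), ρ (x ∘ σ) = ρ x) :
    Antitone (riskWeight ρ) := by
  refine antitone_nat_of_succ_le fun k => ?_
  rcases lt_or_ge (k + 1) n with hk | hk
  · have := map_tailInd_add_map_tailInd_add_two_le hadd hsub hlaw hk
    simp only [riskWeight]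
    linarith
  · have hzero : riskWeight ρ (k + 1) = 0 := by
      rw [riskWeight, tailInd_eq_zero hk, tailInd_eq_zero (by omega), sub_self]
    exact hzero ▸ riskWeight_nonneg hρ k

theorem sum_riskWeight (ρ : (Fin n → ℝ) → ℝ) :
    ∑ i : Fin n, riskWeight ρ i = ρ 0 - ρ (fun _ => 1) := by
  rw [Fin.sum_univ_eq_sum_range (riskWeight ρ)]
  exact (sum_range_sub (fun k => ρ (tailInd n k)) n).trans
    (by rw [tailInd_zero, tailInd_eq_zero le_rfl])

theorem lEstimator_riskWeight_tailInd (h0 : ρ 0 = 0) (k : ℕ) :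
    lEstimator (fun i => riskWeight ρ i) (tailInd n k) = ρ (tailInd n k) := by
  rcases le_or_gt k n with hk | hk
  · induction hk using Nat.decreasingInduction with
    | self => simp [tailInd_eq_zero le_rfl, h0, lEstimator]
    | of_succ k hk ih =>
      have hstep := lEstimator_tailInd_sub_succ (fun i => riskWeight ρ i) ⟨k, hk⟩
      have hweight : riskWeight ρ k = ρ (tailInd n (k + 1)) - ρ (tailInd n k) := rfl
      simp only at hstep
      linarith
  · simp [tailInd_eq_zero hk.le, h0, lEstimator]

end RiskWeights

section OrderStatistics

variable {n : ℕ}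

theorem orderStat_comp_perm (x : Fin n → ℝ) (σ : Equiv.Perm (Fin n)) (k : ℕ) :
    orderStat (x ∘ σ) k = orderStat x k := by
  have hσ : univ.val.map σ = univ.val := congrArg Finset.val (map_univ_equiv σ)
  rw [orderStat, orderStat, ← Multiset.map_map, hσ]

theorem orderStat_of_monotone {x : Fin n → ℝ} (hx : Monotone x) (i : Fin n) :
    orderStat x (i + 1) = x i := by
  have hsort : (univ.val.map x).sort (· ≤ ·) = List.ofFn x := by
    refine List.Perm.eq_of_pairwise' (Multiset.pairwise_sort _ _) hx.sortedLE_ofFn.pairwise ?_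
    rw [← Multiset.coe_eq_coe, Multiset.sort_eq, Fin.univ_val_map]
  rw [orderStat, hsort, Nat.add_sub_cancel, List.getD_eq_getElem _ _ (by simp),
    List.getElem_ofFn]

theorem sum_mul_neg_orderStat_of_monotone (a : Fin n → ℝ) {x : Fin n → ℝ} (hx : Monotone x) :
    ∑ i : Fin n, a i * -orderStat x (i + 1) = lEstimator a x := by
  simp only [orderStat_of_monotone hx, lEstimator]

theorem sum_mul_neg_orderStat (a x : Fin n → ℝ) :
    ∑ i : Fin n, a i * -orderStat x (i + 1) = lEstimator a (x ∘ Tuple.sort x) := by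
  simp only [← orderStat_comp_perm x (Tuple.sort x)]
  exact sum_mul_neg_orderStat_of_monotone a (Tuple.monotone_sort x)

end OrderStatistics

/-- Comonotonic law-invariant CREs are L-estimators: there is a
unique non-increasing probability vector `a` with
`ρ̂(x) = ∑_i a_i (-x_{i:n})` for all `x`. -/
theorem comonotonic_CRE_representation (n : ℕ) (ρ : (Fin n → ℝ) → ℝ)
    (h_mono : ∀ x y : Fin n → ℝ, (∀ i, x i ≤ y i) → ρ y ≤ ρ x)
    (h_cash : ∀ (x : Fin n → ℝ) (m : ℝ), ρ (fun i => x i + m) = ρ x - m)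
    (h_hom : ∀ (x : Fin n → ℝ) (l : ℝ), 0 ≤ l → ρ (fun i => l * x i) = l * ρ x)
    (h_sub : ∀ x y : Fin n → ℝ, ρ (fun i => x i + y i) ≤ ρ x + ρ y)
    (h_law : ∀ (x : Fin n → ℝ) (σ : Equiv.Perm (Fin n)), ρ (x ∘ σ) = ρ x)
    (h_com : ∀ x y : Fin n → ℝ, (∀ i j, 0 ≤ (x i - x j) * (y i - y j)) →
      ρ (fun i => x i + y i) = ρ x + ρ y) :
    ∃! a : Fin n → ℝ,
      ((∀ i, 0 ≤ a i) ∧ (∀ i j : Fin n, i ≤ j → a j ≤ a i) ∧ ∑ i, a i = 1) ∧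
        ∀ x : Fin n → ℝ, ρ x = ∑ i : Fin n, a i * (-(orderStat x (i + 1))) := by
  have hanti : Antitone ρ := fun x y hxy => h_mono x y hxy
  have hzero : ρ 0 = 0 := by simpa [Pi.zero_def] using h_hom 0 0 le_rfl
  have hconst (c : ℝ) : ρ (fun _ => c) = -c := by simpa [hzero] using h_cash 0 c
  have hadd : IsAdditiveOnMonotone ρ :=
    ⟨fun x y hx hy => h_com x y fun i j => (hx.monovary hy).sub_mul_sub_nonneg j i, fun c x hc => h_hom x c hc⟩
  set a : Fin n → ℝ := fun i => riskWeight ρ i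
  have hsum : ∑ i, a i = 1 := by simp [a, sum_riskWeight, hzero, hconst]
  have hmon {x : Fin n → ℝ} (hx : Monotone x) : ρ x = lEstimator a x :=
    hadd.eq_of_eq_tailInd (isAdditiveOnMonotone_lEstimator a)
      (fun c => by rw [hconst, lEstimator_const, hsum, mul_one])
      (fun k => (lEstimator_riskWeight_tailInd hzero k).symm) hx
  refine ⟨a, ⟨⟨fun i => riskWeight_nonneg hanti i,
    fun i j hij => antitone_riskWeight hanti hadd h_sub h_law hij, hsum⟩,
    fun x => by rw [sum_mul_neg_orderStat, ← hmon (Tuple.monotone_sort x), h_law]⟩, ?_⟩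
  rintro b ⟨-, hb⟩
  refine (eq_of_lEstimator_tailInd_eq fun k => ?_).symm
  rw [← sum_mul_neg_orderStat_of_monotone b (monotone_tailInd n k), ← hb,
    hmon (monotone_tailInd n k)]
end
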